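/- Merge characterises the branching order: B1 ≽ B2 if and only if merge B1 B2 B1 (B1 merged with B2 yields B1). -/
import Mathlib


/-- Behaviours of Stateful Processes. Labels `left`/`right` are modelled as
`Bool` (`true` = left, `false` = right). -/
inductive Beh (P E V X : Type) : Type
  | endB : Beh P E V X
  | send : P → E → Beh P E V X → Beh P E V X
  | recv : P → V → Beh P E V X → Beh P E V X
  | sel : P → Bool → Beh P E V X → Beh P E V X
  | branch : P → Option (Beh P E V X) → Option (Beh P E V X) → Beh P E V X
  | cond : E → Beh P E V X → Beh P E V X → Beh P E V X
  | call : X → Beh P E V X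

mutual
/-- The merge relation on behaviours. -/
inductive merge {P E V X : Type} :
    Beh P E V X → Beh P E V X → Beh P E V X → Prop
  | endB : merge .endB .endB .endB
  | send {B1 B2 B} (p : P) (e : E) :
      merge B1 B2 B → merge (.send p e B1) (.send p e B2) (.send p e B)
  | recv {B1 B2 B} (p : P) (x : V) :
      merge B1 B2 B → merge (.recv p x B1) (.recv p x B2) (.recv p x B)
  | sel {B1 B2 B} (p : P) (l : Bool) :
      merge B1 B2 B → merge (.sel p l B1) (.sel p l B2) (.sel p l B)
  | branch {l1 l2 l r1 r2 r} (p : P) :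
      omerge l1 l2 l → omerge r1 r2 r →
      merge (.branch p l1 r1) (.branch p l2 r2) (.branch p l r)
  | cond {Bt1 Bt2 Bt Be1 Be2 Be} (e : E) :
      merge Bt1 Bt2 Bt → merge Be1 Be2 Be →
      merge (.cond e Bt1 Be1) (.cond e Bt2 Be2) (.cond e Bt Be)
  | call (x : X) : merge (.call x) (.call x) (.call x)

/-- Componentwise merge of optional behaviours. -/
inductive omerge {P E V X : Type} :
    Option (Beh P E V X) → Option (Beh P E V X) → Option (Beh P E V X) → Prop
  | nn : omerge none none none
  | sn (b : Beh P E V X) : omerge (some b) none (some b)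
  | ns (b : Beh P E V X) : omerge none (some b) (some b)
  | ss {b1 b2 b : Beh P E V X} : merge b1 b2 b → omerge (some b1) (some b2) (some b)
end

mutual
/-- The branching order on behaviours: `mb B B'` means `B` offers at least the
branches of `B'` (written `B ≽ B'`). -/
inductive mb {P E V X : Type} : Beh P E V X → Beh P E V X → Prop
  | endB : mb .endB .endB
  | send {B B'} (p : P) (e : E) : mb B B' → mb (.send p e B) (.send p e B')
  | recv {B B'} (p : P) (x : V) : mb B B' → mb (.recv p x B) (.recv p x B')
  | sel {B B'} (p : P) (l : Bool) : mb B B' → mb (.sel p l B) (.sel p l B')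
  | branch_nn (p : P) (mL mR : Option (Beh P E V X)) :
      mb (.branch p mL mR) (.branch p none none)
  | branch_ns {Br Br'} (p : P) (mL : Option (Beh P E V X)) :
      mb Br Br' → mb (.branch p mL (some Br)) (.branch p none (some Br'))
  | branch_sn {Bl Bl'} (p : P) (mR : Option (Beh P E V X)) :
      mb Bl Bl' → mb (.branch p (some Bl) mR) (.branch p (some Bl') none)
  | branch_ss {Bl Bl' Br Br'} (p : P) :
      mb Bl Bl' → mb Br Br' →
      mb (.branch p (some Bl) (some Br)) (.branch p (some Bl') (some Br'))
  | cond {B1 B1' B2 B2'} (e : E) :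
      mb B1 B1' → mb B2 B2' → mb (.cond e B1 B2) (.cond e B1' B2')
  | call (x : X) : mb (.call x) (.call x)
end

theorem mb_merge {P E V X : Type} {B1 B2 : Beh P E V X} (h : mb B1 B2) :
    merge B1 B2 B1 := by
  induction h with
  | endB => exact .endB
  | send p e _ ih => exact .send p e ih
  | recv p x _ ih => exact .recv p x ih
  | sel p l _ ih => exact .sel p l ih
  | branch_nn p mL mR =>
      refine .branch p ?_ ?_ <;>
        · first
          | (cases mL with
             | none => exact .nn
             | some b => exact .sn b)
          | (cases mR with
             | none => exact .nn
             | some b => exact .sn b)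
  | branch_ns p mL _ ih =>
      refine .branch p ?_ (.ss ih)
      cases mL with
      | none => exact .nn
      | some b => exact .sn b
  | branch_sn p mR _ ih =>
      refine .branch p (.ss ih) ?_
      cases mR with
      | none => exact .nn
      | some b => exact .sn b
  | branch_ss p _ _ ih1 ih2 => exact .branch p (.ss ih1) (.ss ih2)
  | cond e _ _ ih1 ih2 => exact .cond e ih1 ih2
  | call x => exact .call x

theorem merge_mb {P E V X : Type} {B1 B2 B : Beh P E V X} (h : merge B1 B2 B) :
    B = B1 → mb B1 B2 := by
  refine merge.rec (motive_1 := fun B1 B2 B _ => B = B1 → mb B1 B2)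
    (motive_2 := fun o1 o2 o _ => o = o1 →
      o2 = none ∨ ∃ b1 b2, o1 = some b1 ∧ o2 = some b2 ∧ mb b1 b2)
    ?_ ?_ ?_ ?_ ?_ ?_ ?_ ?_ ?_ ?_ ?_ h
  · intro _; exact .endB
  · intro B1 B2 B p e _ ih heq
    cases heq; exact .send p e (ih rfl)
  · intro B1 B2 B p x _ ih heq
    cases heq; exact .recv p x (ih rfl)
  · intro B1 B2 B p l _ ih heq
    cases heq; exact .sel p l (ih rfl)
  · intro l1 l2 l r1 r2 r p _ _ ihl ihr heq
    injection heq with _ hl hr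
    subst hl; subst hr
    rcases ihl rfl with hl2 | ⟨bl1, bl2, h1, h2, hmb⟩ <;>
      rcases ihr rfl with hr2 | ⟨br1, br2, g1, g2, gmb⟩
    · subst hl2; subst hr2; exact .branch_nn p l r
    · subst hl2; subst g1; subst g2; exact .branch_ns p l gmb
    · subst hr2; subst h1; subst h2; exact .branch_sn p r hmb
    · subst h1; subst h2; subst g1; subst g2; exact .branch_ss p hmb gmb
  · intro Bt1 Bt2 Bt Be1 Be2 Be e _ _ ih1 ih2 heq
    injection heq with h1 h2 h3
    subst h2; subst h3
    exact .cond e (ih1 rfl) (ih2 rfl)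
  · intro x _; exact .call x
  · intro _; exact Or.inl rfl
  · intro b _; exact Or.inl rfl
  · intro b heq; exact absurd heq (by simp)
  · intro b1 b2 b _ ih heq
    injection heq with heq
    exact Or.inr ⟨b1, b2, rfl, rfl, ih heq⟩

theorem stmt12 {P E V X : Type} (B1 B2 : Beh P E V X) :
    mb B1 B2 ↔ merge B1 B2 B1 := by
  exact ⟨mb_merge, fun h => merge_mb h rfl⟩
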